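/- Under the hypotheses of the previous lemma, assume additionally that E_{l+1} > E_l for some 1 ≤ l < k. Then ∑_{i=l+1}^k ∑_{j=l+1}^k |⟨f_i, ψ_j⟩|² ≥ (k − l) − (η − 1)(∑_{i=1}^k E_i)/(E_{k+1} − E_k) − (η − 1)(∑_{i=1}^l E_i)/(E_{l+1} − E_l). -/

import Mathlib

open Finset RCLike Function
open scoped InnerProductSpace

/-!
Write `A i j = |⟨f_i, ψ_j⟩|²`. Its rows sum to `1` (Parseval), its columns to at most `1`
(Bessel), and `∑_j E_j A i j ≤ η E_i`. At a spectral gap `E_{m-1} < E_m`, every row `i < m` gives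
`E_m - η E_i ≤ ∑_{j<m} (E_m - E_j) A i j`, because the columns `j ≥ m` contribute nonpositively.
Summing over `i < m`, and using `E_m - E_j ≥ E_m - E_{m-1}` for `j < m` together with the column
bound, the `m × m` block of `A` has mass at least `m - (η - 1) ∑_{i<m} E_i / (E_m - E_{m-1})`.
Take `m = k` and `m = l`: the block `[l, k)²` is what is left of the `k × k` block after removing
the first `l` rows (mass at most `l`) and the first `l` columns of the remaining rows (mass at most
`l` minus that of the `l × l` block).
-/

-- Indices start at `0`, so the gap `E (m - 1) < E m` is the paper's `E_m < E_{m+1}`.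
structure OverlapBounds (A : ℕ → ℕ → ℝ) (E : ℕ → ℝ) (η : ℝ) (k N : ℕ) : Prop where
  nonneg : ∀ i j, 0 ≤ A i j
  sum_row : ∀ i < k, ∑ j ∈ range N, A i j = 1
  sum_col_le : ∀ j < N, ∑ i ∈ range k, A i j ≤ 1
  monotoneOn : MonotoneOn E (Set.Iio N)
  energy_le : ∀ i < k, ∑ j ∈ range N, E j * A i j ≤ η * E i

namespace OverlapBounds

variable {A : ℕ → ℕ → ℝ} {E : ℕ → ℝ} {η : ℝ} {k N : ℕ}

theorem sub_mul_le_sum_range (h : OverlapBounds A E η k N) {i m : ℕ} (hi : i < k)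
    (hmN : m ≤ N) : E m - η * E i ≤ ∑ j ∈ range m, (E m - E j) * A i j := by
  have htail : ∑ j ∈ Ico m N, (E m - E j) * A i j ≤ 0 := sum_nonpos fun j hj => by
    obtain ⟨hmj, hjN⟩ := mem_Ico.1 hj
    exact mul_nonpos_of_nonpos_of_nonneg
      (sub_nonpos.2 (h.monotoneOn (hmj.trans_lt hjN) hjN hmj)) (h.nonneg i j)
  have hfull : ∑ j ∈ range N, (E m - E j) * A i j = E m - ∑ j ∈ range N, E j * A i j := by
    simp only [sub_mul, sum_sub_distrib, ← mul_sum, h.sum_row i hi, mul_one]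
  rw [← sum_range_add_sum_Ico _ hmN] at hfull
  linarith [h.energy_le i hi]

theorem sub_div_le_sum_range (h : OverlapBounds A E η k N) {m : ℕ} (hmk : m ≤ k) (hmN : m < N)
    (hgap : E (m - 1) < E m) :
    m - (η - 1) * (∑ i ∈ range m, E i) / (E m - E (m - 1)) ≤
      ∑ i ∈ range m, ∑ j ∈ range m, A i j := by
  set t : ℕ → ℝ := fun j => ∑ i ∈ range m, A i j
  have ht : ∀ j < N, t j ≤ 1 := fun j hj =>
    (sum_le_sum_of_subset_of_nonneg (range_subset_range.2 hmk) fun i _ _ => h.nonneg i j).trans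
      (h.sum_col_le j hj)
  have hrows : m * E m - η * ∑ i ∈ range m, E i ≤ ∑ j ∈ range m, (E m - E j) * t j :=
    calc m * E m - η * ∑ i ∈ range m, E i = ∑ i ∈ range m, (E m - η * E i) := by
          simp [sum_sub_distrib, mul_sum]
      _ ≤ ∑ i ∈ range m, ∑ j ∈ range m, (E m - E j) * A i j :=
          sum_le_sum fun i hi => h.sub_mul_le_sum_range ((mem_range.1 hi).trans_le hmk) hmN.le
      _ = ∑ j ∈ range m, (E m - E j) * t j := by rw [sum_comm]; simp only [t, mul_sum]
  have hcols : (E m - E (m - 1)) * (m - ∑ j ∈ range m, t j) ≤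
      m * E m - ∑ j ∈ range m, E j - ∑ j ∈ range m, (E m - E j) * t j :=
    calc (E m - E (m - 1)) * (m - ∑ j ∈ range m, t j)
        = ∑ j ∈ range m, (E m - E (m - 1)) * (1 - t j) := by
          rw [← mul_sum, sum_sub_distrib, sum_const, card_range, nsmul_one]
      _ ≤ ∑ j ∈ range m, (E m - E j) * (1 - t j) := sum_le_sum fun j hj => by
          have hjm := mem_range.1 hj
          refine mul_le_mul_of_nonneg_right ?_ (sub_nonneg.2 (ht j (hjm.trans hmN)))
          exact sub_le_sub_left
            (h.monotoneOn (hjm.trans hmN) (Set.mem_Iio.2 (by omega)) (by omega)) _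
      _ = m * E m - ∑ j ∈ range m, E j - ∑ j ∈ range m, (E m - E j) * t j := by
          simp [mul_one_sub, sum_sub_distrib]
  rw [sum_comm, sub_le_comm, le_div_iff₀ (sub_pos.2 hgap)]
  linarith

theorem sub_le_sum_Ico (h : OverlapBounds A E η k N) {l : ℕ} (hlk : l < k) (hkN : k < N)
    (hgapk : E (k - 1) < E k) (hgapl : E (l - 1) < E l) :
    k - l - (η - 1) * (∑ i ∈ range k, E i) / (E k - E (k - 1))
        - (η - 1) * (∑ i ∈ range l, E i) / (E l - E (l - 1)) ≤
      ∑ i ∈ Ico l k, ∑ j ∈ Ico l k, A i j := by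
  have hblock_k := h.sub_div_le_sum_range le_rfl hkN hgapk
  have hblock_l := h.sub_div_le_sum_range hlk.le (hlk.trans hkN) hgapl
  have hrows : ∑ i ∈ range l, ∑ j ∈ range k, A i j ≤ l :=
    calc ∑ i ∈ range l, ∑ j ∈ range k, A i j ≤ ∑ i ∈ range l, ∑ j ∈ range N, A i j :=
          sum_le_sum fun i _ => sum_le_sum_of_subset_of_nonneg (range_subset_range.2 hkN.le)
            fun j _ _ => h.nonneg i j
      _ = l := by
          rw [sum_congr rfl fun i hi => h.sum_row i ((mem_range.1 hi).trans hlk)]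
          simp
  have hcols : ∑ i ∈ range k, ∑ j ∈ range l, A i j ≤ l :=
    calc ∑ i ∈ range k, ∑ j ∈ range l, A i j ≤ ∑ j ∈ range l, (1 : ℝ) := by
          rw [sum_comm]
          exact sum_le_sum fun j hj => h.sum_col_le j ((mem_range.1 hj).trans (hlk.trans hkN))
      _ = l := by simp
  have hsplit_rows (g : ℕ → ℝ) : ∑ i ∈ range k, g i = ∑ i ∈ range l, g i + ∑ i ∈ Ico l k, g i :=
    (sum_range_add_sum_Ico g hlk.le).symm
  have hsplit_cols : ∑ i ∈ Ico l k, ∑ j ∈ range k, A i j =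
      ∑ i ∈ Ico l k, ∑ j ∈ range l, A i j + ∑ i ∈ Ico l k, ∑ j ∈ Ico l k, A i j := by
    rw [← sum_add_distrib]
    exact sum_congr rfl fun i _ => hsplit_rows (A i)
  rw [hsplit_rows fun i => ∑ j ∈ range k, A i j] at hblock_k
  rw [hsplit_rows fun i => ∑ j ∈ range l, A i j] at hcols
  linarith

end OverlapBounds

theorem OrthonormalBasis.re_inner_map_self_eq_sum {𝕜 E ι : Type*} [RCLike 𝕜]
    [NormedAddCommGroup E] [InnerProductSpace 𝕜 E] [Fintype ι] (b : OrthonormalBasis ι 𝕜 E)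
    {T : E →ₗ[𝕜] E} (hT : T.IsSymmetric) {μ : ι → ℝ} (hμ : ∀ j, T (b j) = (μ j : 𝕜) • b j)
    (x : E) : re ⟪x, T x⟫_𝕜 = ∑ j, μ j * ‖⟪x, b j⟫_𝕜‖ ^ 2 := by
  rw [← b.sum_inner_mul_inner, map_sum]
  refine sum_congr rfl fun j _ => ?_
  rw [← hT, hμ, inner_smul_left, conj_ofReal, ← inner_conj_symm (b j) x, mul_left_comm,
    RCLike.mul_conj, ← ofReal_pow, ← ofReal_mul, ofReal_re]

theorem OverlapBounds.of_orthonormalBasis {𝕜 E : Type*} [RCLike 𝕜] [NormedAddCommGroup E]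
    [InnerProductSpace 𝕜 E] {k N : ℕ} (b : OrthonormalBasis (Fin N) 𝕜 E) {T : E →ₗ[𝕜] E}
    (hT : T.IsSymmetric) {μ : Fin N → ℝ} (hμ : Monotone μ)
    (hb : ∀ j, T (b j) = (μ j : 𝕜) • b j) {f : Fin k → E} (hf : Orthonormal 𝕜 f)
    (hkN : k ≤ N) {η : ℝ} (hfT : ∀ i, re ⟪f i, T (f i)⟫_𝕜 ≤ η * μ (Fin.castLE hkN i)) :
    OverlapBounds (fun i j => ‖⟪extend Fin.val f 0 i, extend Fin.val b 0 j⟫_𝕜‖ ^ 2)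
      (extend Fin.val μ 0) η k N := by
  have hE (j : Fin N) : extend Fin.val μ 0 j = μ j := Fin.val_injective.extend_apply μ 0 j
  have sum_row (i : Fin k) :
      ∑ j ∈ range N, ‖⟪extend Fin.val f 0 i, extend Fin.val b 0 j⟫_𝕜‖ ^ 2 = 1 := by
    rw [← Fin.sum_univ_eq_sum_range]
    simp only [Fin.val_injective.extend_apply]
    rw [b.sum_sq_norm_inner_left, hf.1 i, one_pow]
  have sum_col_le (j : Fin N) :
      ∑ i ∈ range k, ‖⟪extend Fin.val f 0 i, extend Fin.val b 0 j⟫_𝕜‖ ^ 2 ≤ 1 := by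
    rw [← Fin.sum_univ_eq_sum_range]
    simp only [Fin.val_injective.extend_apply]
    exact (hf.sum_inner_products_le (b j)).trans_eq (by rw [b.orthonormal.1 j, one_pow])
  have energy_le (i : Fin k) : ∑ j ∈ range N, extend Fin.val μ 0 j *
      ‖⟪extend Fin.val f 0 i, extend Fin.val b 0 j⟫_𝕜‖ ^ 2 ≤ η * extend Fin.val μ 0 i := by
    rw [← Fin.sum_univ_eq_sum_range,
      show extend Fin.val μ 0 i = μ (Fin.castLE hkN i) from hE (Fin.castLE hkN i)]
    simp only [Fin.val_injective.extend_apply]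
    exact (b.re_inner_map_self_eq_sum hT hb (f i)).symm.trans_le (hfT i)
  exact ⟨fun _ _ => by positivity, fun i hi => sum_row ⟨i, hi⟩, fun j hj => sum_col_le ⟨j, hj⟩,
    fun i hi j hj hij => (hE ⟨i, hi⟩).trans_le ((hμ hij).trans_eq (hE ⟨j, hj⟩).symm),
    fun i hi => energy_le ⟨i, hi⟩⟩

theorem Fin.sum_ite_le_val {M : Type*} [AddCommMonoid M] {k l : ℕ} (g : ℕ → M) :
    ∑ i : Fin k, (if l ≤ (i : ℕ) then g i else 0) = ∑ i ∈ Ico l k, g i := by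
  rw [Fin.sum_univ_eq_sum_range (fun i => if l ≤ i then g i else 0), ← sum_filter, range_eq_Ico,
    Ico_filter_le, Nat.zero_max]

theorem Fin.sum_filter_val_lt {M : Type*} [AddCommMonoid M] {k l : ℕ} (hlk : l ≤ k) (g : ℕ → M) :
    ∑ i ∈ univ.filter (fun i : Fin k => (i : ℕ) < l), g i = ∑ i ∈ range l, g i := by
  rw [sum_filter, Fin.sum_univ_eq_sum_range (fun i => if i < l then g i else 0), ← sum_filter,
    range_eq_Ico, Ico_filter_lt, min_eq_right hlk, range_eq_Ico]

theorem Fin.sum_sum_ite_le_val {M : Type*} [AddCommMonoid M] {k l : ℕ} (g : ℕ → ℕ → M) :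
    ∑ i : Fin k, ∑ j : Fin k, (if l ≤ (i : ℕ) ∧ l ≤ (j : ℕ) then g i j else 0) =
      ∑ i ∈ Ico l k, ∑ j ∈ Ico l k, g i j := by
  simp only [ite_and, sum_ite_irrel, sum_const_zero, Fin.sum_ite_le_val]
  exact Fin.sum_ite_le_val fun i => ∑ j ∈ Ico l k, g i j

/-- Corollary of Lemma 2 of Seiringer–Yin: under the same hypotheses, if in addition
`E_{l+1} > E_l` for some `1 ≤ l < k`, then
`∑_{i,j=l+1}^k |⟨f i, ψ j⟩|² ≥ (k-l) - (η-1)(∑_{i=1}^k E_i)/(E_{k+1}-E_k)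
  - (η-1)(∑_{i=1}^l E_i)/(E_{l+1}-E_l)`. -/
theorem corollary_eigenfunction_overlap {N : ℕ}
    (H : EuclideanSpace ℂ (Fin N) →ₗ[ℂ] EuclideanSpace ℂ (Fin N))
    (hsym : ∀ x y : EuclideanSpace ℂ (Fin N), (inner ℂ (H x) y : ℂ) = inner ℂ x (H y))
    (μ : Fin N → ℝ) (hμmono : Monotone μ)
    (ψ : Fin N → EuclideanSpace ℂ (Fin N)) (hortho : Orthonormal ℂ ψ)
    (heig : ∀ i, H (ψ i) = (μ i : ℂ) • ψ i)
    (k : ℕ) (hkN : k < N)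
    (f : Fin k → EuclideanSpace ℂ (Fin N)) (hf : Orthonormal ℂ f)
    (η : ℝ)
    (hfH : ∀ i : Fin k,
      (inner ℂ (f i) (H (f i)) : ℂ).re ≤ η * μ (Fin.castLE hkN.le i))
    (hgapk : μ ⟨k - 1, by omega⟩ < μ ⟨k, hkN⟩)
    (l : ℕ) (hlk : l < k)
    (hgapl : μ ⟨l - 1, by omega⟩ < μ ⟨l, by omega⟩) :
    (k : ℝ) - l
      - (η - 1) * (∑ i : Fin k, μ (Fin.castLE hkN.le i)) /
          (μ ⟨k, hkN⟩ - μ ⟨k - 1, by omega⟩)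
      - (η - 1) * (∑ i ∈ Finset.univ.filter (fun i : Fin k => (i : ℕ) < l),
            μ (Fin.castLE hkN.le i)) /
          (μ ⟨l, by omega⟩ - μ ⟨l - 1, by omega⟩) ≤
      ∑ i : Fin k, ∑ j : Fin k,
        (if l ≤ (i : ℕ) ∧ l ≤ (j : ℕ) then
          ‖(inner ℂ (f i) (ψ (Fin.castLE hkN.le j)) : ℂ)‖ ^ 2 else 0) := by
  obtain ⟨b, rfl⟩ : ∃ b : OrthonormalBasis (Fin N) ℂ (EuclideanSpace ℂ (Fin N)), ⇑b = ψ :=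
    ⟨.mk hortho (hortho.linearIndependent.span_eq_top_of_card_eq_finrank' (by simp)).ge,
      OrthonormalBasis.coe_mk _ _⟩
  have hA := OverlapBounds.of_orthonormalBasis b hsym hμmono heig hf hkN.le hfH
  have hE (j : Fin N) : extend Fin.val μ 0 j = μ j := Fin.val_injective.extend_apply μ 0 j
  have hF (i : Fin k) : extend Fin.val f 0 i = f i := Fin.val_injective.extend_apply f 0 i
  have hB (j : Fin N) : extend Fin.val b 0 j = b j := Fin.val_injective.extend_apply b 0 j
  simp only [← hE, ← hF, ← hB, Fin.val_castLE] at hgapk hgapl ⊢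
  rw [Fin.sum_univ_eq_sum_range (extend Fin.val μ 0), Fin.sum_filter_val_lt hlk.le]
  exact (hA.sub_le_sum_Ico hlk hkN hgapk hgapl).trans_eq (Fin.sum_sum_ite_le_val _).symm
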